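/- Let S ⊆ ℤ^r × ℕ be a strongly non-negative semigroup and let Γ ⊆ S be a non-trivial semigroup ideal of S (i.e., Γ ≠ ∅ and a + S ⊆ Γ for all a ∈ Γ, with Γ closed under addition with S). Then: (i) Δ(Γ) = Δ(S); (ii) ind(Γ) = ind(S); (iii) m(Γ) = m(S). -/

import Mathlib

/-!
# Statement 16

Let `S ⊆ ℤ^r × ℕ` be a strongly non-negative semigroup and `Γ ⊆ S` a non-trivial semigroup
ideal.  Then `Δ(Γ) = Δ(S)`, `ind(Γ) = ind(S)` and `m(Γ) = m(S)`.

Notation (following Kaveh–Khovanskii): for a semigroup `S ⊆ ℤ^r × ℕ`, with `π` the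
projection to the last coordinate, `G(S)` is the group generated by `S`, `Con(S)` the
closed convex cone generated by `S` in `ℝ^r × ℝ`, `L(S)` its linear span,
`M(S) = L(S) ∩ π⁻¹(ℝ≥0)`, `∂M = L(S) ∩ π⁻¹(0)`, `∂M_ℤ = ∂M ∩ ℤ^(r+1)`,
`m(S) = [ℤ : π(G(S))]`, `ind(S) = [∂M_ℤ : G(S) ∩ ∂M]`, and
`Δ(S) = Con(S) ∩ π⁻¹(m(S))` is the Newton–Okounkov body of `S`.
`S` is strongly non-negative if `Con(S)` is strictly convex and meets `∂M` only at `0`.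
-/

open Filter

namespace NOSemigroup

variable (r : ℕ)

/-- The lattice `ℤ^r × ℤ` containing `ℤ^r × ℕ`. -/
abbrev Z (r : ℕ) := (Fin r → ℤ) × ℤ

/-- The ambient real vector space `ℝ^r × ℝ`. -/
abbrev E (r : ℕ) := (Fin r → ℝ) × ℝ

/-- Inclusion `ℤ^r × ℕ → ℤ^r × ℤ`. -/
def toZ (q : (Fin r → ℤ) × ℕ) : Z r := (q.1, (q.2 : ℤ))

/-- The canonical embedding of the lattice `ℤ^r × ℤ` into `ℝ^r × ℝ`. -/
def latticeEmb : Z r →+ E r where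
  toFun z := (fun i => (z.1 i : ℝ), (z.2 : ℝ))
  map_zero' := by
    refine Prod.ext (funext fun i => ?_) ?_ <;> simp
  map_add' a b := by
    refine Prod.ext (funext fun i => ?_) ?_ <;> simp

/-- The image of a subset of `ℤ^r × ℕ` in `ℝ^r × ℝ`. -/
def embSet (S : Set ((Fin r → ℤ) × ℕ)) : Set (E r) :=
  (fun q => latticeEmb r (toZ r q)) '' S

/-- The closed convex cone generated by a subset `T` of `ℝ^r × ℝ`:  the closure of the set
of all non-negative linear combinations of elements of `T`. -/
def conGen (T : Set (E r)) : Set (E r) :=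
  closure {x | ∃ (n : ℕ) (c : Fin n → ℝ) (v : Fin n → E r),
    (∀ i, 0 ≤ c i) ∧ (∀ i, v i ∈ T) ∧ x = ∑ i, c i • v i}

/-- `Con(S)`, the closed convex cone generated by `S`. -/
def coneOf (S : Set ((Fin r → ℤ) × ℕ)) : Set (E r) :=
  conGen r (embSet r S)

/-- `L(S)`, the linear span of `S` in `ℝ^r × ℝ`. -/
def spanOf (S : Set ((Fin r → ℤ) × ℕ)) : Submodule ℝ (E r) :=
  Submodule.span ℝ (embSet r S)

/-- `G(S)`, the subgroup of `ℤ^r × ℤ` generated by `S`. -/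
def groupOf (S : Set ((Fin r → ℤ) × ℕ)) : AddSubgroup (Z r) :=
  AddSubgroup.closure (toZ r '' S)

/-- `m(S) = [ℤ : π(G(S))]`, the index of the image of `G(S)` under the projection to the
last coordinate. -/
noncomputable def mIndex (S : Set ((Fin r → ℤ) × ℕ)) : ℕ :=
  ((groupOf r S).map (AddMonoidHom.snd (Fin r → ℤ) ℤ)).index

/-- `∂M_ℤ = ∂M ∩ ℤ^(r+1)`: the group of lattice points lying in `L(S)` with vanishing last
coordinate. -/
def boundaryLattice (S : Set ((Fin r → ℤ) × ℕ)) : AddSubgroup (Z r) where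
  carrier := {z | latticeEmb r z ∈ spanOf r S ∧ z.2 = 0}
  zero_mem' := by
    refine ⟨?_, rfl⟩
    rw [map_zero]
    exact (spanOf r S).zero_mem
  add_mem' := by
    rintro a b ⟨ha1, ha2⟩ ⟨hb1, hb2⟩
    refine ⟨?_, by simp [ha2, hb2]⟩
    rw [map_add]
    exact (spanOf r S).add_mem ha1 hb1
  neg_mem' := by
    rintro a ⟨h1, h2⟩
    refine ⟨?_, by simp [h2]⟩
    rw [map_neg]
    exact (spanOf r S).neg_mem h1

/-- `ind(S) = [∂M_ℤ : G(S) ∩ ∂M]`. -/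
noncomputable def indIndex (S : Set ((Fin r → ℤ) × ℕ)) : ℕ :=
  (groupOf r S).relIndex (boundaryLattice r S)

/-- The Newton–Okounkov body `Δ(S) = Con(S) ∩ π⁻¹(m(S))`. -/
noncomputable def okBody (S : Set ((Fin r → ℤ) × ℕ)) : Set (E r) :=
  coneOf r S ∩ {x | x.2 = (mIndex r S : ℝ)}

/-- `S` is non-negative (automatic here) and strongly non-negative:  `Con(S)` is strictly
convex and intersects `∂M = L(S) ∩ π⁻¹(0)` only at the origin. -/
def StronglyNonneg (S : Set ((Fin r → ℤ) × ℕ)) : Prop :=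
  (∀ x ∈ coneOf r S, -x ∈ coneOf r S → x = 0) ∧
  (∀ x ∈ coneOf r S, (x ∈ spanOf r S ∧ x.2 = 0) → x = 0)

end NOSemigroup

open NOSemigroup

/-!
`Γ` contains the translate `a + S` of `S`, so `G(Γ)` and `L(Γ)` contain `S` by subtraction, and
`Con(Γ) ⊇ Con(S)` because `s = lim (a + N s) / N`. The invariants `Δ`, `ind` and `m` depend
only on `G`, `L` and `Con`.
-/

section Ideal

variable {M G : Type*} [AddMonoid M] {S Γ : Set M} {a : M}

theorem add_nsmul_mem_of_forall_add_mem (hIdeal : ∀ b ∈ Γ, ∀ s ∈ S, b + s ∈ Γ) (ha : a ∈ Γ)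
    {s : M} (hs : s ∈ S) (N : ℕ) : a + N • s ∈ Γ := by
  induction N with
  | zero => simpa using ha
  | succ N ih => simpa [succ_nsmul, add_assoc] using hIdeal _ ih s hs

theorem AddSubgroup.closure_image_eq_of_add_mem [AddGroup G] (f : M →+ G) (hΓS : Γ ⊆ S)
    (ha : a ∈ Γ) (hIdeal : ∀ s ∈ S, a + s ∈ Γ) :
    AddSubgroup.closure (f '' Γ) = AddSubgroup.closure (f '' S) := by
  refine le_antisymm (AddSubgroup.closure_mono (Set.image_mono hΓS)) ?_
  rw [AddSubgroup.closure_le]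
  rintro _ ⟨s, hs, rfl⟩
  have hfa : f a ∈ AddSubgroup.closure (f '' Γ) := AddSubgroup.subset_closure ⟨a, ha, rfl⟩
  refine (AddSubgroup.add_mem_cancel_left _ hfa).mp ?_
  exact map_add f a s ▸ AddSubgroup.subset_closure ⟨a + s, hIdeal s hs, rfl⟩

theorem Submodule.span_image_eq_of_add_mem {R V : Type*} [Ring R] [AddCommGroup V] [Module R V]
    (f : M →+ V) (hΓS : Γ ⊆ S) (ha : a ∈ Γ) (hIdeal : ∀ s ∈ S, a + s ∈ Γ) :
    Submodule.span R (f '' Γ) = Submodule.span R (f '' S) := by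
  refine le_antisymm (Submodule.span_mono (Set.image_mono hΓS)) ?_
  rw [Submodule.span_le]
  rintro _ ⟨s, hs, rfl⟩
  have hfa : f a ∈ Submodule.span R (f '' Γ) := Submodule.subset_span ⟨a, ha, rfl⟩
  refine (Submodule.add_mem_iff_right _ hfa).mp ?_
  exact map_add f a s ▸ Submodule.subset_span ⟨a + s, hIdeal s hs, rfl⟩

end Ideal

namespace NOSemigroup

variable {r : ℕ}

theorem conGen_mono {T U : Set (E r)} (hTU : T ⊆ U) : conGen r T ⊆ conGen r U := by
  refine closure_mono ?_
  rintro _ ⟨n, c, v, hc, hv, rfl⟩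
  exact ⟨n, c, v, hc, fun i => hTU (hv i), rfl⟩

/-- `∑ cᵢ vᵢ` is the limit of the combinations `∑ (cᵢ / N) (g + N vᵢ) = ∑ cᵢ vᵢ + (∑ cᵢ / N) g`
of elements of `T`. -/
theorem conGen_subset_of_add_nsmul_mem {T U : Set (E r)} (g : E r)
    (h : ∀ u ∈ U, ∀ N : ℕ, g + N • u ∈ T) : conGen r U ⊆ conGen r T := by
  refine closure_minimal ?_ isClosed_closure
  rintro _ ⟨n, c, v, hc, hv, rfl⟩
  have approx : ∀ N : ℕ, 0 < N → (∑ i, c i • v i) + ((∑ i, c i) / N) • g ∈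
      {x | ∃ (m : ℕ) (d : Fin m → ℝ) (w : Fin m → E r),
        (∀ i, 0 ≤ d i) ∧ (∀ i, w i ∈ T) ∧ x = ∑ i, d i • w i} := by
    intro N hN
    have hN0 : (N : ℝ) ≠ 0 := Nat.cast_ne_zero.mpr hN.ne'
    refine ⟨n, fun i => c i / N, fun i => g + N • v i, fun i => by have := hc i; positivity,
      fun i => h _ (hv i) N, ?_⟩
    have hterm : ∀ i, (c i / N) • (g + N • v i) = (c i / N) • g + c i • v i := fun i => by
      rw [smul_add, ← Nat.cast_smul_eq_nsmul ℝ, smul_smul, div_mul_cancel₀ _ hN0]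
    rw [Finset.sum_congr rfl fun i _ => hterm i, Finset.sum_add_distrib, ← Finset.sum_smul,
      ← Finset.sum_div, add_comm]
  have lim : Tendsto (fun N : ℕ => (∑ i, c i • v i) + ((∑ i, c i) / N) • g) atTop
      (nhds (∑ i, c i • v i)) := by
    have hcoef : Tendsto (fun N : ℕ => (∑ i, c i) / (N : ℝ)) atTop (nhds 0) :=
      tendsto_const_div_atTop_nhds_zero_nat _
    simpa using tendsto_const_nhds.add (hcoef.smul_const g)
  exact mem_closure_of_tendsto lim ((eventually_gt_atTop 0).mono approx)

def embHom (r : ℕ) : (Fin r → ℤ) × ℕ →+ E r :=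
  (latticeEmb r).comp ((AddMonoidHom.id _).prodMap (Nat.castAddMonoidHom ℤ))

theorem embSet_eq_image (S : Set ((Fin r → ℤ) × ℕ)) : embSet r S = embHom r '' S := rfl

theorem groupOf_eq_image (S : Set ((Fin r → ℤ) × ℕ)) :
    groupOf r S = AddSubgroup.closure
      ((AddMonoidHom.id _).prodMap (Nat.castAddMonoidHom ℤ) '' S) := rfl

section Ideal

variable {S Γ : Set ((Fin r → ℤ) × ℕ)} {a : (Fin r → ℤ) × ℕ}

theorem groupOf_eq_of_add_mem (hΓS : Γ ⊆ S) (ha : a ∈ Γ) (hIdeal : ∀ s ∈ S, a + s ∈ Γ) :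
    groupOf r Γ = groupOf r S := by
  simp only [groupOf_eq_image]
  exact AddSubgroup.closure_image_eq_of_add_mem _ hΓS ha hIdeal

theorem spanOf_eq_of_add_mem (hΓS : Γ ⊆ S) (ha : a ∈ Γ) (hIdeal : ∀ s ∈ S, a + s ∈ Γ) :
    spanOf r Γ = spanOf r S := by
  simp only [spanOf, embSet_eq_image]
  exact Submodule.span_image_eq_of_add_mem _ hΓS ha hIdeal

theorem coneOf_eq_of_forall_add_mem (hΓS : Γ ⊆ S) (ha : a ∈ Γ)
    (hIdeal : ∀ b ∈ Γ, ∀ s ∈ S, b + s ∈ Γ) : coneOf r Γ = coneOf r S := by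
  simp only [coneOf, embSet_eq_image]
  refine (conGen_mono (Set.image_mono hΓS)).antisymm
    (conGen_subset_of_add_nsmul_mem (embHom r a) ?_)
  rintro _ ⟨s, hs, rfl⟩ N
  exact ⟨a + N • s, add_nsmul_mem_of_forall_add_mem hIdeal ha hs N, by rw [map_add, map_nsmul]⟩

end Ideal

theorem boundaryLattice_congr {S T : Set ((Fin r → ℤ) × ℕ)} (h : spanOf r S = spanOf r T) :
    boundaryLattice r S = boundaryLattice r T := by
  ext z
  exact and_congr_left' (h ▸ Iff.rfl)

end NOSemigroup

theorem stmt16_general (r : ℕ) (S Γ : Set ((Fin r → ℤ) × ℕ))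
    (hΓS : Γ ⊆ S) (hΓne : Γ.Nonempty)
    (hIdeal : ∀ a ∈ Γ, ∀ s ∈ S, a + s ∈ Γ) :
    okBody r Γ = okBody r S ∧ indIndex r Γ = indIndex r S ∧ mIndex r Γ = mIndex r S := by
  obtain ⟨a, ha⟩ := hΓne
  have hG : groupOf r Γ = groupOf r S := groupOf_eq_of_add_mem hΓS ha (hIdeal a ha)
  have hL : spanOf r Γ = spanOf r S := spanOf_eq_of_add_mem hΓS ha (hIdeal a ha)
  have hC : coneOf r Γ = coneOf r S := coneOf_eq_of_forall_add_mem hΓS ha hIdeal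
  have hm : mIndex r Γ = mIndex r S := by rw [mIndex, mIndex, hG]
  refine ⟨by rw [okBody, okBody, hC, hm], ?_, hm⟩
  rw [indIndex, indIndex, hG, boundaryLattice_congr hL]

/-- Let `S ⊆ ℤ^r × ℕ` be a strongly non-negative semigroup and let
`Γ ⊆ S` be a non-trivial semigroup ideal (`Γ ≠ ∅` and `a + S ⊆ Γ` for all `a ∈ Γ`).
Then (i) `Δ(Γ) = Δ(S)`; (ii) `ind(Γ) = ind(S)`; (iii) `m(Γ) = m(S)`. -/
theorem stmt16 (r : ℕ) (S Γ : Set ((Fin r → ℤ) × ℕ))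
    (hS : ∀ a ∈ S, ∀ b ∈ S, a + b ∈ S)
    (hSnn : StronglyNonneg r S)
    (hΓS : Γ ⊆ S) (hΓne : Γ.Nonempty)
    (hIdeal : ∀ a ∈ Γ, ∀ s ∈ S, a + s ∈ Γ) :
    okBody r Γ = okBody r S ∧ indIndex r Γ = indIndex r S ∧ mIndex r Γ = mIndex r S :=
  stmt16_general r S Γ hΓS hΓne hIdeal
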